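/- Let M > 1 and 0 < ε < M − 1. There is a constant C > 0, depending only on M, ε and q₁,…,q_r, such that for all reals a > 0 and b ≥ 1, ∑_{ξ ∈ ℤ^S∖{0}, ⟦a⋆ξ⟧ ≥ b} ⟦a⋆ξ⟧^{−M} ≤ C·a^{−1}·b^{−M+1+ε}. -/

import Mathlib

/-- `x ∈ ℤ^S`: the only primes allowed in the denominator of `x` are those of
`Q` (for `S = {∞} ∪ Q`). -/
def IsSInt (Q : Finset ℕ) (x : ℚ) : Prop :=
  ∀ p : ℕ, p.Prime → p ∣ x.den → p ∈ Q

/-- The height `⟦a⋆ξ⟧ = (1+|a·ξ|)·∏_{q ∈ Q}(1+|ξ|_q)`, where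
`|ξ|_q = q^{-v_q(ξ)}`. -/
noncomputable def ht (Q : Finset ℕ) (a : ℝ) (ξ : ℚ) : ℝ :=
  (1 + |a * (ξ : ℝ)|) * ∏ q ∈ Q, (1 + (q : ℝ) ^ (-(padicValRat q ξ)))

/-!
For `ξ ∈ ℤ^S` the `q`-adic factors of the height multiply to at least the denominator of `ξ`,
so `⟦a⋆ξ⟧ ≥ den ξ + a |num ξ|`. On the range `⟦a⋆ξ⟧ ≥ b` one has
`⟦a⋆ξ⟧^{-M} ≤ b^{-M+1+ε} ⟦a⋆ξ⟧^{-(1+ε)}`, and for a fixed denominator `D` the sum of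
`(D + a|n|)^{-(1+ε)}` over `n ≠ 0` is at most `2 (εa)⁻¹ D^{-ε}`, by comparison with the telescoping
series of `t ↦ t^{-ε}`. The denominators are exactly the `Q`-factored numbers, over which
`∑ D^{-ε}` is a convergent Euler product `∏_{q ∈ Q} (1 - q^{-ε})⁻¹`.
-/

open Real

lemma IsSInt.den_mem_factoredNumbers {Q : Finset ℕ} {ξ : ℚ} (hξ : IsSInt Q ξ) :
    ξ.den ∈ Nat.factoredNumbers Q :=
  (Nat.mem_factoredNumbers' ..).2 fun p hp hdvd => hξ p hp hdvd

lemma pow_factorization_den_le_one_add_zpow {q : ℕ} (hq : q.Prime) (ξ : ℚ) :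
    (q : ℝ) ^ ξ.den.factorization q ≤ 1 + (q : ℝ) ^ (-padicValRat q ξ) := by
  by_cases hdvd : q ∣ ξ.den
  · have hnum : ¬ (q : ℤ) ∣ ξ.num := fun h =>
      hq.ne_one (Nat.Coprime.eq_one_of_dvd (Nat.Coprime.coprime_dvd_left (Int.natCast_dvd.1 h)
        ξ.reduced) hdvd)
    have hval : -padicValRat q ξ = (ξ.den.factorization q : ℤ) := by
      simp [padicValRat_def, padicValInt.eq_zero_of_not_dvd hnum, Nat.factorization_def _ hq]
    rw [hval, zpow_natCast]
    exact le_add_of_nonneg_left zero_le_one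
  · rw [Nat.factorization_eq_zero_of_not_dvd hdvd, pow_zero]
    exact le_add_of_nonneg_right (zpow_nonneg (Nat.cast_nonneg q) _)

lemma den_le_prod_one_add_zpow {Q : Finset ℕ} (hQ : ∀ q ∈ Q, q.Prime) {ξ : ℚ}
    (hξ : IsSInt Q ξ) :
    (ξ.den : ℝ) ≤ ∏ q ∈ Q, (1 + (q : ℝ) ^ (-padicValRat q ξ)) := by
  have hsupp : ξ.den.factorization.support ⊆ Q := fun p hp => by
    rw [Nat.support_factorization, Nat.mem_primeFactors] at hp
    exact hξ p hp.1 hp.2.1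
  have hden : ξ.den = ∏ q ∈ Q, q ^ ξ.den.factorization q := by
    conv_lhs => rw [← Nat.prod_factorization_pow_eq_self ξ.den_nz]
    exact Finsupp.prod_of_support_subset _ hsupp _ fun i _ => pow_zero i
  rw [hden, Nat.cast_prod]
  push_cast
  exact Finset.prod_le_prod (fun q _ => by positivity)
    fun q hq => pow_factorization_den_le_one_add_zpow (hQ q hq) ξ

lemma ht_pos (Q : Finset ℕ) (a : ℝ) (ξ : ℚ) : 0 < ht Q a ξ := by
  unfold ht
  positivity

lemma den_add_mul_natAbs_num_le_ht {Q : Finset ℕ} (hQ : ∀ q ∈ Q, q.Prime) {a : ℝ} (ha : 0 ≤ a)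
    {ξ : ℚ} (hξ : IsSInt Q ξ) :
    (ξ.den : ℝ) + a * ξ.num.natAbs ≤ ht Q a ξ := by
  have hden : (0 : ℝ) < ξ.den := by exact_mod_cast ξ.pos
  calc (ξ.den : ℝ) + a * ξ.num.natAbs = (1 + |a * (ξ : ℝ)|) * ξ.den := by
        rw [abs_mul, abs_of_nonneg ha, Rat.cast_def, abs_div, Nat.abs_cast, Nat.cast_natAbs,
          Int.cast_abs]
        field_simp
    _ ≤ ht Q a ξ := mul_le_mul_of_nonneg_left (den_le_prod_one_add_zpow hQ hξ) (by positivity)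

/-- Tangent line of the convex function `t ↦ t ^ (-ε)` at `x + h`: after clearing denominators
this is Bernoulli's inequality `(1 + h / x) ^ (1 + ε) ≥ 1 + (1 + ε) h / x`. -/
lemma mul_rpow_neg_one_add_le_rpow_neg_sub {x h ε : ℝ} (hx : 0 < x) (hh : 0 ≤ h) (hε : 0 ≤ ε) :
    ε * h * (x + h) ^ (-(1 + ε)) ≤ x ^ (-ε) - (x + h) ^ (-ε) := by
  have hy : 0 < x + h := by positivity
  have hX : 0 < x ^ ε := rpow_pos_of_pos hx ε
  have hY : 0 < (x + h) ^ ε := rpow_pos_of_pos hy ε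
  have hbern : (x + (1 + ε) * h) * x ^ ε ≤ (x + h) * (x + h) ^ ε := by
    have key := one_add_mul_self_le_rpow_one_add (s := h / x) (by linarith [div_nonneg hh hx.le])
      (le_add_of_nonneg_right hε)
    have e : 1 + h / x = (x + h) / x := by field_simp
    rw [e, div_rpow hy.le hx.le, rpow_one_add' hx.le (by positivity),
      rpow_one_add' hy.le (by positivity), le_div_iff₀ (by positivity)] at key
    calc (x + (1 + ε) * h) * x ^ ε = (1 + (1 + ε) * (h / x)) * (x * x ^ ε) := by field_simp
      _ ≤ _ := key
  rw [rpow_neg hx.le, rpow_neg hy.le, rpow_neg hy.le, rpow_one_add' hy.le (by positivity)]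
  have e : ε * h * ((x + h) * (x + h) ^ ε)⁻¹ + ((x + h) ^ ε)⁻¹ =
      (x + (1 + ε) * h) / ((x + h) * (x + h) ^ ε) := by
    field_simp
    ring
  rw [le_sub_iff_add_le, e, div_le_iff₀ (by positivity), inv_mul_eq_div, le_div_iff₀ hX]
  exact hbern

lemma summable_and_tsum_le_of_le_sub_succ {f g : ℕ → ℝ} (hf : ∀ n, 0 ≤ f n) (hg : ∀ n, 0 ≤ g n)
    (hfg : ∀ n, f n ≤ g n - g (n + 1)) :
    Summable f ∧ ∑' n, f n ≤ g 0 := by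
  have hpartial (N : ℕ) : ∑ n ∈ Finset.range N, f n ≤ g 0 :=
    calc ∑ n ∈ Finset.range N, f n ≤ ∑ n ∈ Finset.range N, (g n - g (n + 1)) :=
          Finset.sum_le_sum fun n _ => hfg n
      _ = g 0 - g N := Finset.sum_range_sub' g N
      _ ≤ g 0 := sub_le_self _ (hg N)
  exact ⟨summable_of_sum_range_le hf hpartial, Real.tsum_le_of_sum_range_le hf hpartial⟩

lemma summable_and_tsum_rpow_neg_one_add_le {D a ε : ℝ} (hD : 0 < D) (ha : 0 < a) (hε : 0 < ε) :
    Summable (fun n : ℕ => (D + a * (n + 1)) ^ (-(1 + ε))) ∧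
      ∑' n : ℕ, (D + a * (n + 1)) ^ (-(1 + ε)) ≤ (ε * a)⁻¹ * D ^ (-ε) := by
  have hstep (n : ℕ) : (D + a * (n + 1)) ^ (-(1 + ε)) ≤
      (ε * a)⁻¹ * (D + a * n) ^ (-ε) - (ε * a)⁻¹ * (D + a * (n + 1 : ℕ)) ^ (-ε) := by
    have := mul_rpow_neg_one_add_le_rpow_neg_sub (x := D + a * n) (h := a) (by positivity) ha.le
      hε.le
    rw [add_assoc, ← mul_add_one] at this
    rw [← mul_le_mul_iff_of_pos_left (by positivity : 0 < ε * a), mul_sub, ← mul_assoc,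
      ← mul_assoc, mul_inv_cancel₀ (by positivity), one_mul, one_mul]
    exact_mod_cast this
  obtain ⟨hsum, hle⟩ := summable_and_tsum_le_of_le_sub_succ (fun n => by positivity)
    (fun n => by positivity) hstep
  exact ⟨hsum, by simpa using hle⟩

lemma summable_factoredNumbers_rpow_neg (s : Finset ℕ) {ε : ℝ} (hε : 0 < ε) :
    Summable (fun m : Nat.factoredNumbers s => ((m : ℕ) : ℝ) ^ (-ε)) := by
  let f : ℕ →* ℝ :=
    { toFun := fun n => (n : ℝ) ^ (-ε)
      map_one' := by simp
      map_mul' := fun m n => by push_cast; exact mul_rpow (Nat.cast_nonneg m) (Nat.cast_nonneg n) }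
  refine (EulerProduct.summable_and_hasSum_factoredNumbers_prod_filter_prime_geometric
    (f := f) (fun hp => ?_) s).1.of_norm
  change ‖(_ : ℝ) ^ (-ε)‖ < 1
  rw [Real.norm_of_nonneg (rpow_nonneg (Nat.cast_nonneg _) _)]
  exact rpow_lt_one_of_one_lt_of_neg (by exact_mod_cast hp.one_lt) (neg_neg_of_pos hε)

lemma summable_and_tsum_prod_le_of_fiberwise {β γ : Type*} {f : β × γ → ℝ} (hf : 0 ≤ f)
    {g : β → ℝ} (hfg : ∀ b, Summable (fun c => f (b, c)) ∧ ∑' c, f (b, c) ≤ g b)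
    (hg : Summable g) :
    Summable f ∧ ∑' x, f x ≤ ∑' b, g b := by
  have hsum : Summable f := (summable_prod_of_nonneg hf).2
    ⟨fun b => (hfg b).1, hg.of_nonneg_of_le (fun b => tsum_nonneg fun c => hf _) fun b => (hfg b).2⟩
  refine ⟨hsum, ?_⟩
  rw [hsum.tsum_prod' fun b => (hfg b).1]
  exact Summable.tsum_le_tsum (fun b => (hfg b).2) ((summable_prod_of_nonneg hf).1 hsum).2 hg

lemma summable_and_tsum_le_of_le_comp_injective {α β : Type*} {f : α → ℝ} {F : β → ℝ}
    (hFs : Summable F) (hf : 0 ≤ f) (hF : 0 ≤ F) {ι : α → β} (hι : Function.Injective ι)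
    (hfF : ∀ x, f x ≤ F (ι x)) :
    Summable f ∧ ∑' x, f x ≤ ∑' y, F y := by
  have hsum : Summable f := (hFs.comp_injective hι).of_nonneg_of_le hf hfF
  exact ⟨hsum, hsum.tsum_le_tsum_of_inj ι hι (fun y _ => hF y) hfF hFs⟩

lemma rpow_neg_le_rpow_mul_rpow_neg_one_add {x b M ε : ℝ} (hb : 0 < b) (hbx : b ≤ x)
    (hεM : ε ≤ M - 1) :
    x ^ (-M) ≤ b ^ (-M + 1 + ε) * x ^ (-(1 + ε)) := by
  have hx : 0 < x := hb.trans_le hbx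
  calc x ^ (-M) = x ^ (-M + 1 + ε) * x ^ (-(1 + ε)) := by rw [← rpow_add hx]; ring_nf
    _ ≤ b ^ (-M + 1 + ε) * x ^ (-(1 + ε)) :=
      mul_le_mul_of_nonneg_right (rpow_le_rpow_of_nonpos hb hbx (by linarith)) (by positivity)

section

variable {Q : Finset ℕ} {a ε : ℝ}

lemma summable_and_tsum_factoredNumbers_prod_rpow_le (ha : 0 < a) (hε : 0 < ε) :
    Summable (fun x : Nat.factoredNumbers Q × Bool × ℕ =>
        (((x.1 : ℕ) : ℝ) + a * (x.2.2 + 1)) ^ (-(1 + ε))) ∧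
      ∑' x : Nat.factoredNumbers Q × Bool × ℕ, (((x.1 : ℕ) : ℝ) + a * (x.2.2 + 1)) ^ (-(1 + ε)) ≤
        2 * (ε * a)⁻¹ * ∑' D : Nat.factoredNumbers Q, ((D : ℕ) : ℝ) ^ (-ε) := by
  rw [mul_assoc, ← tsum_mul_left, ← tsum_mul_left]
  refine summable_and_tsum_prod_le_of_fiberwise (fun x => ?_) (fun D => ?_)
    (((summable_factoredNumbers_rpow_neg Q hε).mul_left _).mul_left _)
  · dsimp only [Pi.zero_apply]
    positivity
  have hD : (0 : ℝ) < (D : ℕ) := by exact_mod_cast Nat.pos_of_ne_zero D.2.1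
  obtain ⟨hsum, hle⟩ := summable_and_tsum_prod_le_of_fiberwise
    (f := fun y : Bool × ℕ => (((D : ℕ) : ℝ) + a * (y.2 + 1)) ^ (-(1 + ε)))
    (g := fun _ => (ε * a)⁻¹ * ((D : ℕ) : ℝ) ^ (-ε))
    (fun y => by dsimp only [Pi.zero_apply]; positivity)
    (fun _ => summable_and_tsum_rpow_neg_one_add_le hD ha hε) Summable.of_finite
  exact ⟨hsum, hle.trans_eq (by simp [two_mul])⟩

theorem summable_and_tsum_ht_rpow_neg_one_add_le (hQ : ∀ q ∈ Q, q.Prime) (ha : 0 < a)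
    (hε : 0 < ε) :
    Summable (fun ξ : {ξ : ℚ // IsSInt Q ξ ∧ ξ ≠ 0} => ht Q a ξ ^ (-(1 + ε))) ∧
      ∑' ξ : {ξ : ℚ // IsSInt Q ξ ∧ ξ ≠ 0}, ht Q a ξ ^ (-(1 + ε)) ≤
        2 * (ε * a)⁻¹ * ∑' D : Nat.factoredNumbers Q, ((D : ℕ) : ℝ) ^ (-ε) := by
  obtain ⟨hsum, hle⟩ := summable_and_tsum_factoredNumbers_prod_rpow_le (Q := Q) ha hε
  let code (ξ : {ξ : ℚ // IsSInt Q ξ ∧ ξ ≠ 0}) : Nat.factoredNumbers Q × Bool × ℕ :=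
    (⟨ξ.1.den, ξ.2.1.den_mem_factoredNumbers⟩, decide (0 < ξ.1.num), ξ.1.num.natAbs - 1)
  have hnum (ξ : {ξ : ℚ // IsSInt Q ξ ∧ ξ ≠ 0}) : ξ.1.num ≠ 0 := Rat.num_ne_zero.2 ξ.2.2
  have hcode : Function.Injective code := fun ξ η h => by
    simp only [code, Prod.mk.injEq, Subtype.mk.injEq, decide_eq_decide] at h
    have := hnum ξ
    have := hnum η
    exact Subtype.ext (Rat.ext (by omega) h.1)
  have hlower (ξ : {ξ : ℚ // IsSInt Q ξ ∧ ξ ≠ 0}) :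
      ((ξ.1.den : ℕ) : ℝ) + a * ((ξ.1.num.natAbs - 1 : ℕ) + 1) ≤ ht Q a ξ := by
    rw [Nat.cast_pred (Int.natAbs_pos.2 (hnum ξ)), sub_add_cancel]
    exact den_add_mul_natAbs_num_le_ht hQ ha.le ξ.2.1
  have hpos (ξ : {ξ : ℚ // IsSInt Q ξ ∧ ξ ≠ 0}) :
      0 < ((ξ.1.den : ℕ) : ℝ) + a * ((ξ.1.num.natAbs - 1 : ℕ) + 1) := by
    have : (0 : ℝ) < ξ.1.den := by exact_mod_cast ξ.1.pos
    positivity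
  obtain ⟨hsum', hle'⟩ := summable_and_tsum_le_of_le_comp_injective hsum
    (f := fun ξ : {ξ : ℚ // IsSInt Q ξ ∧ ξ ≠ 0} => ht Q a ξ ^ (-(1 + ε)))
    (fun ξ => rpow_nonneg (ht_pos Q a ξ.1).le _) (fun x => by positivity) hcode
    (fun ξ => rpow_le_rpow_of_nonpos (hpos ξ) (hlower ξ) (by linarith))
  exact ⟨hsum', hle'.trans hle⟩

end

theorem stmt10_general (Q : Finset ℕ) (hQ : ∀ q ∈ Q, q.Prime) (M ε : ℝ)
    (hε : 0 < ε) (hεM : ε < M - 1) :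
    ∃ C > (0 : ℝ), ∀ a b : ℝ, 0 < a → 1 ≤ b →
      Summable (fun ξ : {ξ : ℚ // IsSInt Q ξ ∧ ξ ≠ 0 ∧ b ≤ ht Q a ξ} =>
        ht Q a ξ.1 ^ (-M)) ∧
      ∑' ξ : {ξ : ℚ // IsSInt Q ξ ∧ ξ ≠ 0 ∧ b ≤ ht Q a ξ}, ht Q a ξ.1 ^ (-M) ≤
        C * a⁻¹ * b ^ (-M + 1 + ε) := by
  set K := ∑' D : Nat.factoredNumbers Q, ((D : ℕ) : ℝ) ^ (-ε)
  have hK : 0 < K := (summable_factoredNumbers_rpow_neg Q hε).tsum_pos (fun _ => by positivity)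
    ⟨1, by simp [Nat.mem_factoredNumbers]⟩ (by simp)
  refine ⟨2 * ε⁻¹ * K, by positivity, fun a b ha hb => ?_⟩
  have hb0 : 0 < b := one_pos.trans_le hb
  obtain ⟨hsum, hle⟩ := summable_and_tsum_ht_rpow_neg_one_add_le hQ ha hε
  obtain ⟨hsumb, hleb⟩ := summable_and_tsum_le_of_le_comp_injective
    (hsum.mul_left (b ^ (-M + 1 + ε)))
    (f := fun ξ : {ξ : ℚ // IsSInt Q ξ ∧ ξ ≠ 0 ∧ b ≤ ht Q a ξ} => ht Q a ξ ^ (-M))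
    (fun ξ => rpow_nonneg (ht_pos Q a ξ.1).le _)
    (fun ξ => mul_nonneg (rpow_nonneg hb0.le _) (rpow_nonneg (ht_pos Q a ξ.1).le _))
    (ι := fun ξ => ⟨ξ.1, ξ.2.1, ξ.2.2.1⟩) (fun _ _ h => Subtype.ext (Subtype.mk.inj h))
    (fun ξ => rpow_neg_le_rpow_mul_rpow_neg_one_add hb0 ξ.2.2.2 hεM.le)
  refine ⟨hsumb, hleb.trans ?_⟩
  rw [tsum_mul_left]
  calc b ^ (-M + 1 + ε) * ∑' ξ : {ξ : ℚ // IsSInt Q ξ ∧ ξ ≠ 0}, ht Q a ξ ^ (-(1 + ε))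
      ≤ b ^ (-M + 1 + ε) * (2 * (ε * a)⁻¹ * K) := by gcongr
    _ = 2 * ε⁻¹ * K * a⁻¹ * b ^ (-M + 1 + ε) := by rw [mul_inv]; ring

/-- For `M > 1` and `0 < ε < M - 1` there is `C > 0` (depending only on `M`,
`ε` and `Q`) such that for all `a > 0` and `b ≥ 1`,
`∑_{ξ ∈ ℤ^S∖{0}, ⟦a⋆ξ⟧ ≥ b} ⟦a⋆ξ⟧^{-M} ≤ C·a⁻¹·b^{-M+1+ε}`. -/
theorem stmt10 (Q : Finset ℕ) (hQ : ∀ q ∈ Q, q.Prime) (M ε : ℝ)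
    (hM : 1 < M) (hε : 0 < ε) (hεM : ε < M - 1) :
    ∃ C > (0 : ℝ), ∀ a b : ℝ, 0 < a → 1 ≤ b →
      Summable (fun ξ : {ξ : ℚ // IsSInt Q ξ ∧ ξ ≠ 0 ∧ b ≤ ht Q a ξ} =>
        ht Q a ξ.1 ^ (-M)) ∧
      ∑' ξ : {ξ : ℚ // IsSInt Q ξ ∧ ξ ≠ 0 ∧ b ≤ ht Q a ξ}, ht Q a ξ.1 ^ (-M) ≤
        C * a⁻¹ * b ^ (-M + 1 + ε) :=
  stmt10_general Q hQ M ε hε hεM
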